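/- arXiv:2008.05552 — 2 statements merged into one kernel-verified Lean document; each statement's English description precedes it below -/
import Mathlib

section
/- Let $X$ be a real random variable with support contained in a compact interval $[a,b]$, and let $f:\mathbb{R}\to\mathbb{R}$ be continuously differentiable on $[a,b]$. If $x_1,\ldots,x_N$ are i.i.d. samples of $X$ and $x_{(1)}\le x_{(2)}\le\cdots\le x_{(N)}$ denotes the sorted sample, then $\frac{1}{N-1}\sum_{i=1}^{N-1}\big(f(x_{(i+1)})-f(x_{(i)})\big)^2 \to 0$ almost surely as $N\to\infty$. -/
/-!
The bound is pathwise. If `f` is `K`-Lipschitz on `[a, b]` and `y₀ ≤ ⋯ ≤ yₙ` lie in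
`[a, b]`, the increments `dᵢ = yᵢ₊₁ - yᵢ` are nonnegative, so
`∑ (f yᵢ₊₁ - f yᵢ)² ≤ K² ∑ dᵢ² ≤ K² (∑ dᵢ)² = K² (yₙ - y₀)² ≤ K² (b - a)²`.
Along the sorted sample of an outcome whose samples all lie in `[a, b]`, the sum of squared
increments is thus bounded uniformly in `N`, and the factor `1 / (N - 1)` sends the average to `0`.
-/

open MeasureTheory ProbabilityTheory Filter

/-- The sorted (nondecreasing) list of the first `N` samples `X 0 ω, …, X (N-1) ω`. -/
noncomputable def sortedSample {Ω : Type*} (X : ℕ → Ω → ℝ) (N : ℕ) (ω : Ω) : List ℝ :=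
  (List.ofFn fun i : Fin N => X i ω).mergeSort

open Finset
open scoped NNReal Topology

theorem sum_sq_sub_succ_le_sq_sub {y : ℕ → ℝ} {n : ℕ} (hy : ∀ i < n, y i ≤ y (i + 1)) :
    ∑ i ∈ range n, (y (i + 1) - y i) ^ 2 ≤ (y n - y 0) ^ 2 := by
  rw [← sum_range_sub]
  exact sum_sq_le_sq_sum_of_nonneg fun i hi => sub_nonneg.2 (hy i (mem_range.1 hi))

theorem LipschitzOnWith.sum_sq_sub_comp_le {f : ℝ → ℝ} {K : ℝ≥0} {a b : ℝ}
    (hf : LipschitzOnWith K f (Set.Icc a b)) {y : ℕ → ℝ} {n : ℕ}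
    (hy : ∀ i ≤ n, y i ∈ Set.Icc a b) (hmono : ∀ i < n, y i ≤ y (i + 1)) :
    ∑ i ∈ range n, (f (y (i + 1)) - f (y i)) ^ 2 ≤ (K * (b - a)) ^ 2 := by
  have hstep : ∀ i < n, (f (y (i + 1)) - f (y i)) ^ 2 ≤ K ^ 2 * (y (i + 1) - y i) ^ 2 := by
    intro i hi
    have hdist := hf.dist_le_mul (y (i + 1)) (hy _ hi) (y i) (hy _ hi.le)
    rw [Real.dist_eq, Real.dist_eq] at hdist
    rw [← sq_abs, ← sq_abs (y (i + 1) - y i), ← mul_pow]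
    exact pow_le_pow_left₀ (abs_nonneg _) hdist 2
  have hends : (y n - y 0) ^ 2 ≤ (b - a) ^ 2 := by
    have hyn := hy n le_rfl
    have hy0 := hy 0 (Nat.zero_le n)
    exact sq_le_sq' (by linarith [hyn.1, hy0.2]) (by linarith [hyn.2, hy0.1])
  calc ∑ i ∈ range n, (f (y (i + 1)) - f (y i)) ^ 2
      ≤ ∑ i ∈ range n, K ^ 2 * (y (i + 1) - y i) ^ 2 :=
        sum_le_sum fun i hi => hstep i (mem_range.1 hi)
    _ = K ^ 2 * ∑ i ∈ range n, (y (i + 1) - y i) ^ 2 := (mul_sum ..).symm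
    _ ≤ K ^ 2 * (y n - y 0) ^ 2 := by gcongr; exact sum_sq_sub_succ_le_sq_sub hmono
    _ ≤ (K * (b - a)) ^ 2 := by rw [mul_pow]; gcongr

section SortedSample

variable {Ω : Type*} (X : ℕ → Ω → ℝ) (N : ℕ) (ω : Ω)

theorem length_sortedSample : (sortedSample X N ω).length = N := by
  simp [sortedSample]

theorem sortedSample_getD_mem_range {i : ℕ} (hi : i < N) :
    (sortedSample X N ω).getD i 0 ∈ Set.range (X · ω) := by
  have hi' : i < (sortedSample X N ω).length := (length_sortedSample X N ω).symm ▸ hi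
  have hmem := List.getElem_mem hi'
  rw [List.getD_eq_getElem _ _ hi']
  simp only [sortedSample, List.mem_mergeSort, List.mem_ofFn] at hmem
  obtain ⟨j, hj⟩ := hmem
  exact ⟨j, hj⟩

theorem sortedSample_getD_le_succ {i : ℕ} (hi : i + 1 < N) :
    (sortedSample X N ω).getD i 0 ≤ (sortedSample X N ω).getD (i + 1) 0 := by
  have hi' : i + 1 < (sortedSample X N ω).length := (length_sortedSample X N ω).symm ▸ hi
  rw [List.getD_eq_getElem _ _ (Nat.lt_of_succ_lt hi'), List.getD_eq_getElem _ _ hi']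
  exact List.pairwise_iff_getElem.1 (List.pairwise_mergeSort' (· ≤ ·) _) _ _ _ hi'
    (Nat.lt_succ_self i)

end SortedSample

theorem tendsto_one_div_natCast_sub_one_atTop :
    Tendsto (fun N : ℕ => 1 / ((N : ℝ) - 1)) atTop (𝓝 0) :=
  tendsto_const_nhds.div_atTop (tendsto_atTop_add_const_right _ _ tendsto_natCast_atTop_atTop)

theorem avg_sq_increments_sorted_sample_tendsto_zero_general {Ω : Type*} {mΩ : MeasurableSpace Ω}
    (P : Measure Ω) (X : ℕ → Ω → ℝ) (a b : ℝ) (f : ℝ → ℝ)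
    (hsupp : ∀ i, ∀ᵐ ω ∂P, X i ω ∈ Set.Icc a b)
    (hf : ContDiffOn ℝ 1 f (Set.Icc a b)) :
    ∀ᵐ ω ∂P, Tendsto
      (fun N : ℕ => (1 / ((N : ℝ) - 1)) *
        ∑ i ∈ Finset.range (N - 1),
          (f ((sortedSample X N ω).getD (i + 1) 0)
            - f ((sortedSample X N ω).getD i 0)) ^ 2)
      atTop (nhds 0) := by
  obtain ⟨K, hK⟩ := hf.exists_lipschitzOnWith one_ne_zero (convex_Icc a b) isCompact_Icc
  filter_upwards [ae_all_iff.2 hsupp] with ω hω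
  have hmem : ∀ N, ∀ i < N, (sortedSample X N ω).getD i 0 ∈ Set.Icc a b := fun N i hi => by
    obtain ⟨j, hj⟩ := sortedSample_getD_mem_range X N ω hi
    exact hj ▸ hω j
  refine tendsto_one_div_natCast_sub_one_atTop.zero_mul_isBoundedUnder_le
    (isBoundedUnder_of_eventually_le (a := (K * (b - a)) ^ 2) ?_)
  filter_upwards [eventually_ge_atTop 1] with N hN
  rw [Function.comp_apply, Real.norm_of_nonneg (sum_nonneg fun _ _ => sq_nonneg _)]
  exact hK.sum_sq_sub_comp_le (fun i hi => hmem N i (by omega))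
    fun i hi => sortedSample_getD_le_succ X N ω (by omega)

/-- Lemma 1: for iid samples of a random variable supported in `[a,b]` and `f`
continuously differentiable on `[a,b]`, the averaged sum of squared increments of `f` along
the sorted sample tends to `0` almost surely. -/
theorem avg_sq_increments_sorted_sample_tendsto_zero {Ω : Type*} {mΩ : MeasurableSpace Ω}
    (P : Measure Ω) [IsProbabilityMeasure P] (X : ℕ → Ω → ℝ) (a b : ℝ) (f : ℝ → ℝ)
    (hab : a ≤ b)
    (hmeas : ∀ i, Measurable (X i))
    (hindep : iIndepFun X P)
    (hident : ∀ i, IdentDistrib (X i) (X 0) P P)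
    (hsupp : ∀ i, ∀ᵐ ω ∂P, X i ω ∈ Set.Icc a b)
    (hf : ContDiffOn ℝ 1 f (Set.Icc a b)) :
    ∀ᵐ ω ∂P, Tendsto
      (fun N : ℕ => (1 / ((N : ℝ) - 1)) *
        ∑ i ∈ Finset.range (N - 1),
          (f ((sortedSample X N ω).getD (i + 1) 0)
            - f ((sortedSample X N ω).getD i 0)) ^ 2)
      atTop (nhds 0) :=
  avg_sq_increments_sorted_sample_tendsto_zero_general (mΩ := mΩ) P X a b f hsupp hf
end

section
/- Let $X$ and $Y$ be square-integrable real random variables with positive variances, and suppose $\mathbb{E}[Y\mid X] = aX + b$ and $\mathbb{E}[X\mid Y] = cY + d$ almost surely, for constants $a, c \ne 0$ and $b, d \in \mathbb{R}$. Then $\mathrm{Corr}(\mathbb{E}[Y\mid X], Y)^2 = \mathrm{Corr}(\mathbb{E}[X\mid Y], X)^2$, and both equal $\mathrm{Corr}(X,Y)^2$. -/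
/-!
Squared correlation is symmetric and unchanged when one argument is replaced by an affine image
of it with nonzero slope. Both conditional expectations are such affine images (of `X` and of
`Y`), so both squared correlations reduce to `Corr(X, Y)²`.
-/

open MeasureTheory ProbabilityTheory

noncomputable def cov {Ω : Type*} [MeasurableSpace Ω] (P : Measure Ω) (U V : Ω → ℝ) : ℝ :=
  ∫ ω, U ω * V ω ∂P - (∫ ω, U ω ∂P) * ∫ ω, V ω ∂P

noncomputable def corr {Ω : Type*} [MeasurableSpace Ω] (P : Measure Ω) (U V : Ω → ℝ) : ℝ :=
  cov P U V / Real.sqrt (variance U P * variance V P)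

section Correlation

variable {Ω : Type*} [MeasurableSpace Ω] {P : Measure Ω} {U U' V : Ω → ℝ}

lemma cov_comm (U V : Ω → ℝ) : cov P U V = cov P V U := by
  simp only [cov, mul_comm]

lemma corr_comm (U V : Ω → ℝ) : corr P U V = corr P V U := by
  rw [corr, corr, cov_comm, mul_comm]

lemma cov_congr_left (h : U =ᵐ[P] U') : cov P U V = cov P U' V := by
  rw [cov, cov, integral_congr_ae h, integral_congr_ae
    (f := fun ω => U ω * V ω) (g := fun ω => U' ω * V ω) (h.mul (ae_eq_refl V))]

lemma corr_congr_left (h : U =ᵐ[P] U') : corr P U V = corr P U' V := by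
  rw [corr, corr, cov_congr_left h, variance_congr h]

lemma corr_sq (U V : Ω → ℝ) :
    corr P U V ^ 2 = cov P U V ^ 2 / (variance U P * variance V P) := by
  rw [corr, div_pow, Real.sq_sqrt (mul_nonneg (variance_nonneg _ _) (variance_nonneg _ _))]

variable [IsProbabilityMeasure P]

lemma cov_eq_covariance (hU : MemLp U 2 P) (hV : MemLp V 2 P) : cov P U V = cov[U, V; P] :=
  (covariance_eq_sub hU hV).symm

lemma cov_const_mul_add_left (hU : MemLp U 2 P) (hV : MemLp V 2 P) (a b : ℝ) :
    cov P (fun ω => a * U ω + b) V = a * cov P U V := by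
  have hU' : MemLp (fun ω => a * U ω + b) 2 P := (hU.const_mul a).add (memLp_const b)
  rw [cov_eq_covariance hU' hV, cov_eq_covariance hU hV,
    covariance_add_const_left ((hU.const_mul a).integrable one_le_two),
    covariance_const_mul_left]

lemma variance_const_mul_add (hU : AEStronglyMeasurable U P) (a b : ℝ) :
    variance (fun ω => a * U ω + b) P = a ^ 2 * variance U P := by
  rw [variance_add_const (hU.const_mul a), variance_const_mul]

lemma corr_const_mul_add_left_sq (hU : MemLp U 2 P) (hV : MemLp V 2 P) {a : ℝ} (ha : a ≠ 0)
    (b : ℝ) : corr P (fun ω => a * U ω + b) V ^ 2 = corr P U V ^ 2 := by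
  rw [corr_sq, corr_sq, cov_const_mul_add_left hU hV, variance_const_mul_add hU.1, mul_pow,
    mul_assoc, mul_div_mul_left _ _ (pow_ne_zero 2 ha)]

end Correlation

theorem corr_condexp_sq_symm_of_affine_general {Ω : Type*} {mΩ : MeasurableSpace Ω}
    (P : Measure Ω) [IsProbabilityMeasure P] (X Y : Ω → ℝ)
    (hX : MemLp X 2 P) (hY : MemLp Y 2 P)
    (a b c d : ℝ) (ha : a ≠ 0) (hc : c ≠ 0)
    (hYX : (P[Y|MeasurableSpace.comap X Real.measurableSpace])
        =ᵐ[P] fun ω => a * X ω + b)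
    (hXY : (P[X|MeasurableSpace.comap Y Real.measurableSpace])
        =ᵐ[P] fun ω => c * Y ω + d) :
    corr P (P[Y|MeasurableSpace.comap X Real.measurableSpace]) Y ^ 2
        = corr P (P[X|MeasurableSpace.comap Y Real.measurableSpace]) X ^ 2
      ∧ corr P (P[Y|MeasurableSpace.comap X Real.measurableSpace]) Y ^ 2
        = corr P X Y ^ 2 := by
  have hYX_sq : corr P (P[Y|MeasurableSpace.comap X Real.measurableSpace]) Y ^ 2
      = corr P X Y ^ 2 := by
    rw [corr_congr_left hYX, corr_const_mul_add_left_sq hX hY ha b]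
  have hXY_sq : corr P (P[X|MeasurableSpace.comap Y Real.measurableSpace]) X ^ 2
      = corr P X Y ^ 2 := by
    rw [corr_congr_left hXY, corr_const_mul_add_left_sq hY hX hc d, corr_comm]
  exact ⟨hYX_sq.trans hXY_sq.symm, hYX_sq⟩

/-- Proposition 1(1): if both conditional expectations are affine, then
`Corr(E[Y|X], Y)² = Corr(E[X|Y], X)² = Corr(X,Y)²`. -/
theorem corr_condexp_sq_symm_of_affine {Ω : Type*} {mΩ : MeasurableSpace Ω}
    (P : Measure Ω) [IsProbabilityMeasure P] (X Y : Ω → ℝ)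
    (hXm : Measurable X) (hYm : Measurable Y)
    (hX : MemLp X 2 P) (hY : MemLp Y 2 P)
    (hVX : 0 < variance X P) (hVY : 0 < variance Y P)
    (a b c d : ℝ) (ha : a ≠ 0) (hc : c ≠ 0)
    (hYX : (P[Y|MeasurableSpace.comap X Real.measurableSpace])
        =ᵐ[P] fun ω => a * X ω + b)
    (hXY : (P[X|MeasurableSpace.comap Y Real.measurableSpace])
        =ᵐ[P] fun ω => c * Y ω + d) :
    corr P (P[Y|MeasurableSpace.comap X Real.measurableSpace]) Y ^ 2
        = corr P (P[X|MeasurableSpace.comap Y Real.measurableSpace]) X ^ 2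
      ∧ corr P (P[Y|MeasurableSpace.comap X Real.measurableSpace]) Y ^ 2
        = corr P X Y ^ 2 :=
  corr_condexp_sq_symm_of_affine_general (mΩ := mΩ) P X Y hX hY a b c d ha hc hYX hXY
end
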